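/- arXiv:2303.08407 — 2 statements merged into one kernel-verified Lean document; each statement's English description precedes it below -/
import Mathlib

section
/- Fix α ≥ 1. For the Bell-diagonal state ρ_λ, if any of A₀, A₁ = ±σ_z, ±σ_x and B₀ = cosθ σ_z + sinθ σ_x, B₁ = cosθ σ_z − sinθ σ_x with tanθ = (λ₁−λ₂+λ₃−λ₄)/[α(λ₁+λ₂−λ₃−λ₄)], then the α-CHSH value Tr[ρ_λ Ŝ_α] attains the maximum 2√(α²(λ₁+λ₂−λ₃−λ₄)² + (λ₁−λ₂+λ₃−λ₄)²). -/
open Matrix Kronecker Complex Real ComplexOrder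

/-- 2×2 complex matrices (one qubit). -/
abbrev M2 := Matrix (Fin 2) (Fin 2) ℂ
/-- 4×4 complex matrices (two qubits), indexed by `Fin 2 × Fin 2`. -/
abbrev M4 := Matrix (Fin 2 × Fin 2) (Fin 2 × Fin 2) ℂ

noncomputable def σx : M2 := !![0, 1; 1, 0]
noncomputable def σy : M2 := !![0, -Complex.I; Complex.I, 0]
noncomputable def σz : M2 := !![1, 0; 0, -1]

/-- A ±1-valued qubit observable: Hermitian involution. -/
def IsObs (A : M2) : Prop := A.IsHermitian ∧ A * A = 1

/-- A two-qubit density operator. -/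
def IsState (ρ : M4) : Prop := ρ.PosSemidef ∧ ρ.trace = 1

/-- The α-CHSH Bell operator. -/
noncomputable def Sop (α : ℝ) (A0 A1 B0 B1 : M2) : M4 :=
  (α : ℂ) • (A0 ⊗ₖ B0 + A0 ⊗ₖ B1) + A1 ⊗ₖ B0 - A1 ⊗ₖ B1

/-- The α-CHSH Bell value of a state with given observables. -/
noncomputable def BellValue (ρ : M4) (α : ℝ) (A0 A1 B0 B1 : M2) : ℂ :=
  (ρ * Sop α A0 A1 B0 B1).trace

/-- Computational basis vectors of ℂ²⊗ℂ². -/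
def ket (i j : Fin 2) : Fin 2 × Fin 2 → ℂ := fun p => if p = (i, j) then 1 else 0

noncomputable def PhiP : Fin 2 × Fin 2 → ℂ := ((Real.sqrt 2 : ℂ))⁻¹ • (ket 0 0 + ket 1 1)
noncomputable def PhiM : Fin 2 × Fin 2 → ℂ := ((Real.sqrt 2 : ℂ))⁻¹ • (ket 0 0 - ket 1 1)
noncomputable def PsiP : Fin 2 × Fin 2 → ℂ := ((Real.sqrt 2 : ℂ))⁻¹ • (ket 0 1 + ket 1 0)
noncomputable def PsiM : Fin 2 × Fin 2 → ℂ := ((Real.sqrt 2 : ℂ))⁻¹ • (ket 0 1 - ket 1 0)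

/-- Rank-one projector |v⟩⟨v|. -/
noncomputable def proj (v : Fin 2 × Fin 2 → ℂ) : M4 := Matrix.vecMulVec v (star v)

/-- Bell-diagonal two-qubit state. -/
noncomputable def BellDiag (l1 l2 l3 l4 : ℝ) : M4 :=
  (l1 : ℂ) • proj PhiP + (l2 : ℂ) • proj PhiM + (l3 : ℂ) • proj PsiP + (l4 : ℂ) • proj PsiM

noncomputable def YY : M4 := σy ⊗ₖ σy

attribute [local instance] Classical.propDecidable

/-- The positive semidefinite square root of a positive semidefinite matrix
(the definition Mathlib had in December 2024, since removed). -/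
noncomputable def Matrix.PosSemidef.sqrt {n : Type*} [Fintype n] [DecidableEq n]
    {A : Matrix n n ℂ} (hA : A.PosSemidef) : Matrix n n ℂ :=
  hA.1.eigenvectorUnitary.1 * diagonal ((↑) ∘ (√·) ∘ hA.1.eigenvalues) *
    (star hA.1.eigenvectorUnitary : Matrix n n ℂ)

/-- Concurrence of a two-qubit state: `max {0, μ₁ − μ₂ − μ₃ − μ₄}` where the `μᵢ` are the
decreasingly ordered square roots of the eigenvalues of `√ρ (σy⊗σy) ρ* (σy⊗σy) √ρ`
(for the decreasingly ordered values, `μ₁ − μ₂ − μ₃ − μ₄ = 2 max μᵢ − ∑ μᵢ`). -/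
noncomputable def concurrence (ρ : M4) : ℝ :=
  if hρ : ρ.PosSemidef then
    if hX : (hρ.sqrt * (YY * ρ.map (starRingEnd ℂ) * YY) * hρ.sqrt).IsHermitian then
      let μ : Fin 2 × Fin 2 → ℝ := fun p => Real.sqrt (hX.eigenvalues p)
      max 0 (2 * (Finset.univ.sup' Finset.univ_nonempty μ) - ∑ p, μ p)
    else 0
  else 0

/-! The sign `ε` enters the Bell operator squared, and for `B₀, B₁ = cos θ σz ± sin θ σx` the
operator collapses to `2α cos θ · σz⊗σz + 2 sin θ · σx⊗σx`. In a Bell-diagonal state the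
correlations are `⟨σz⊗σz⟩ = λ₁+λ₂−λ₃−λ₄` and `⟨σx⊗σx⟩ = λ₁−λ₂+λ₃−λ₄`, so the Bell value is
`2(a cos θ + b sin θ)` with `a = α(λ₁+λ₂−λ₃−λ₄) ≥ 0`, `b = λ₁−λ₂+λ₃−λ₄`; choosing `tan θ = b / a`
puts `(cos θ, sin θ)` parallel to `(a, b)`, which gives `2√(a² + b²)`. -/

lemma ofReal_sqrt_two_inv_mul_self : ((√2 : ℝ) : ℂ)⁻¹ * ((√2 : ℝ) : ℂ)⁻¹ = 1 / 2 := by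
  rw [← mul_inv, ← Complex.ofReal_mul, Real.mul_self_sqrt zero_le_two]
  norm_num

lemma trace_bellDiag_mul (l1 l2 l3 l4 : ℝ) (M : M4) :
    (BellDiag l1 l2 l3 l4 * M).trace = (1 / 2 : ℂ) *
      ((l1 + l2) * (M (0, 0) (0, 0) + M (1, 1) (1, 1))
        + (l1 - l2) * (M (0, 0) (1, 1) + M (1, 1) (0, 0))
        + (l3 + l4) * (M (0, 1) (0, 1) + M (1, 0) (1, 0))
        + (l3 - l4) * (M (0, 1) (1, 0) + M (1, 0) (0, 1))) := by
  simp [Matrix.trace, Matrix.mul_apply, Fintype.sum_prod_type, BellDiag, proj, PhiP, PhiM, PsiP,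
    PsiM, ket, Matrix.vecMulVec_apply]
  rw [ofReal_sqrt_two_inv_mul_self]
  ring

lemma trace_bellDiag_mul_σz_kronecker_σz (l1 l2 l3 l4 : ℝ) :
    (BellDiag l1 l2 l3 l4 * (σz ⊗ₖ σz)).trace = ((l1 + l2 - l3 - l4 : ℝ) : ℂ) := by
  rw [trace_bellDiag_mul]
  simp [σz]
  ring

lemma trace_bellDiag_mul_σx_kronecker_σx (l1 l2 l3 l4 : ℝ) :
    (BellDiag l1 l2 l3 l4 * (σx ⊗ₖ σx)).trace = ((l1 - l2 + l3 - l4 : ℝ) : ℂ) := by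
  rw [trace_bellDiag_mul]
  simp [σx]
  ring

lemma Sop_smul (α : ℝ) (ε : ℂ) (A0 A1 B0 B1 : M2) :
    Sop α (ε • A0) (ε • A1) (ε • B0) (ε • B1) = (ε * ε) • Sop α A0 A1 B0 B1 := by
  simp only [Sop, smul_kronecker, kronecker_smul, smul_smul]
  module

lemma Sop_add_sub (α : ℝ) (A0 A1 Z X : M2) (c s : ℂ) :
    Sop α A0 A1 (c • Z + s • X) (c • Z - s • X) =
      (2 * α * c) • (A0 ⊗ₖ Z) + (2 * s) • (A1 ⊗ₖ X) := by
  rw [sub_eq_add_neg, ← neg_smul]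
  simp only [Sop, kronecker_add, kronecker_smul]
  module

lemma mul_cos_arctan_div_add_mul_sin_arctan_div {a b : ℝ} (ha : 0 ≤ a) (hb : a = 0 → b = 0) :
    a * Real.cos (Real.arctan (b / a)) + b * Real.sin (Real.arctan (b / a)) = √(a ^ 2 + b ^ 2) := by
  obtain rfl | ha := ha.eq_or_lt
  · simp [hb rfl] -- `b / 0 = 0`, so the angle is `0`
  have hsqrt : √(1 + (b / a) ^ 2) = √(a ^ 2 + b ^ 2) / a := by
    rw [eq_div_iff ha.ne', ← Real.sqrt_sq ha.le, ← Real.sqrt_mul (by positivity)]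
    congr 1
    field_simp
    rw [Real.sq_sqrt (sq_nonneg a)]
  have hpos : 0 < √(a ^ 2 + b ^ 2) := Real.sqrt_pos.2 (by positivity)
  rw [Real.cos_arctan, Real.sin_arctan, hsqrt]
  field_simp
  rw [Real.sq_sqrt (by positivity)]

theorem bellDiag_optimal_measurements_general (α l1 l2 l3 l4 : ℝ) (hα : 1 ≤ α)
    (h12 : l2 ≤ l1) (h23 : l3 ≤ l2) (h34 : l4 ≤ l3)
    (ε : ℝ) (hε : ε = 1 ∨ ε = -1) :
    let θ := Real.arctan ((l1 - l2 + l3 - l4) / (α * (l1 + l2 - l3 - l4)))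
    let A0 : M2 := (ε : ℂ) • σz
    let A1 : M2 := (ε : ℂ) • σx
    let B0 : M2 := (ε : ℂ) • ((Real.cos θ : ℂ) • σz + (Real.sin θ : ℂ) • σx)
    let B1 : M2 := (ε : ℂ) • ((Real.cos θ : ℂ) • σz - (Real.sin θ : ℂ) • σx)
    BellValue (BellDiag l1 l2 l3 l4) α A0 A1 B0 B1 =
      ((2 * Real.sqrt (α ^ 2 * (l1 + l2 - l3 - l4) ^ 2 + (l1 - l2 + l3 - l4) ^ 2) : ℝ) : ℂ) := by
  intro θ A0 A1 B0 B1
  have hεε : (ε : ℂ) * ε = 1 := by rcases hε with rfl | rfl <;> norm_num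
  have hzz : 0 ≤ l1 + l2 - l3 - l4 := by linarith
  have hopt : α * (l1 + l2 - l3 - l4) * Real.cos θ + (l1 - l2 + l3 - l4) * Real.sin θ =
      √((α * (l1 + l2 - l3 - l4)) ^ 2 + (l1 - l2 + l3 - l4) ^ 2) :=
    mul_cos_arctan_div_add_mul_sin_arctan_div (mul_nonneg (by linarith) hzz) fun h => by
      have hc : l1 + l2 - l3 - l4 = 0 := (mul_eq_zero.1 h).resolve_left (by linarith)
      linarith
  rw [BellValue, Sop_smul, hεε, one_smul, Sop_add_sub, mul_add, Matrix.mul_smul, Matrix.mul_smul,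
    trace_add, trace_smul, trace_smul, trace_bellDiag_mul_σz_kronecker_σz,
    trace_bellDiag_mul_σx_kronecker_σx, ← mul_pow, ← hopt]
  simp only [smul_eq_mul]
  norm_cast
  ring

/-- For a Bell-diagonal state with ordered eigenvalues, the observables
`A₀ = ±σz`, `A₁ = ±σx`, `B₀ = ±(cosθ σz + sinθ σx)`, `B₁ = ±(cosθ σz − sinθ σx)`
with `tanθ = (λ₁−λ₂+λ₃−λ₄)/[α(λ₁+λ₂−λ₃−λ₄)]` attain the maximal α-CHSH value
`2√(α²(λ₁+λ₂−λ₃−λ₄)² + (λ₁−λ₂+λ₃−λ₄)²)`. -/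
theorem bellDiag_optimal_measurements (α l1 l2 l3 l4 : ℝ) (hα : 1 ≤ α)
    (h12 : l2 ≤ l1) (h23 : l3 ≤ l2) (h34 : l4 ≤ l3) (h4 : 0 ≤ l4)
    (hsum : l1 + l2 + l3 + l4 = 1)
    (ε : ℝ) (hε : ε = 1 ∨ ε = -1) :
    let θ := Real.arctan ((l1 - l2 + l3 - l4) / (α * (l1 + l2 - l3 - l4)))
    let A0 : M2 := (ε : ℂ) • σz
    let A1 : M2 := (ε : ℂ) • σx
    let B0 : M2 := (ε : ℂ) • ((Real.cos θ : ℂ) • σz + (Real.sin θ : ℂ) • σx)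
    let B1 : M2 := (ε : ℂ) • ((Real.cos θ : ℂ) • σz - (Real.sin θ : ℂ) • σx)
    BellValue (BellDiag l1 l2 l3 l4) α A0 A1 B0 B1 =
      ((2 * Real.sqrt (α ^ 2 * (l1 + l2 - l3 - l4) ^ 2 + (l1 - l2 + l3 - l4) ^ 2) : ℝ) : ℂ) :=
  bellDiag_optimal_measurements_general α l1 l2 l3 l4 hα h12 h23 h34 ε hε
end

section
/- Let α ≥ 1, and for a two-qubit state ρ define the maximal α-CHSH value S*(ρ) = max over ±1-valued qubit observables of Tr[ρ Ŝ_α]. If ρ is separable, then S*(ρ) ≤ 2α. -/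
open Matrix Kronecker Complex Real ComplexOrder

attribute [local instance] Classical.propDecidable

/-- A two-qubit state is separable if it is a convex combination of product states. -/
def IsSepState (ρ : M4) : Prop :=
  ∃ (n : ℕ) (p : Fin n → ℝ) (ρA ρB : Fin n → M2),
    (∀ i, 0 ≤ p i) ∧ (∑ i, p i) = 1 ∧
    (∀ i, (ρA i).PosSemidef ∧ (ρA i).trace = 1) ∧
    (∀ i, (ρB i).PosSemidef ∧ (ρB i).trace = 1) ∧
    ρ = ∑ i, (p i : ℂ) • (ρA i ⊗ₖ ρB i)

/-! A product state assigns to each observable a local expectation value in `[-1, 1]`, and its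
α-CHSH value is the bilinear expression `α a₀ (b₀ + b₁) + a₁ (b₀ - b₁)` in these numbers; for
`α ≥ 1` this is at most `α (|b₀ + b₁| + |b₀ - b₁|) = 2α max (|b₀|, |b₁|) ≤ 2α`. A separable
state is a convex combination of product states and its α-CHSH value is the same convex
combination of theirs. -/

theorem chsh_expression_le {α a₀ a₁ b₀ b₁ : ℝ} (hα : 1 ≤ α) (ha₀ : |a₀| ≤ 1) (ha₁ : |a₁| ≤ 1)
    (hb₀ : |b₀| ≤ 1) (hb₁ : |b₁| ≤ 1) :
    α * (a₀ * b₀ + a₀ * b₁) + a₁ * b₀ - a₁ * b₁ ≤ 2 * α := by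
  have h₀ : a₀ * (b₀ + b₁) ≤ |b₀ + b₁| :=
    (le_abs_self _).trans <| (abs_mul _ _).trans_le (mul_le_of_le_one_left (abs_nonneg _) ha₀)
  have h₁ : a₁ * (b₀ - b₁) ≤ |b₀ - b₁| :=
    (le_abs_self _).trans <| (abs_mul _ _).trans_le (mul_le_of_le_one_left (abs_nonneg _) ha₁)
  have hb : |b₀ + b₁| + |b₀ - b₁| ≤ 2 := by
    rw [abs_le] at hb₀ hb₁
    rcases abs_cases (b₀ + b₁) with ⟨h, _⟩ | ⟨h, _⟩ <;>
      rcases abs_cases (b₀ - b₁) with ⟨h', _⟩ | ⟨h', _⟩ <;> linarith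
  nlinarith [abs_nonneg (b₀ - b₁)]

namespace Matrix

variable {n : Type*} [Fintype n]

theorem PosSemidef.trace_mul_conjTranspose_mul_nonneg {ρ : Matrix n n ℂ} (hρ : ρ.PosSemidef)
    (B : Matrix n n ℂ) : 0 ≤ (ρ * (Bᴴ * B)).trace := by
  rw [← Matrix.mul_assoc, trace_mul_comm, ← Matrix.mul_assoc]
  exact (hρ.mul_mul_conjTranspose_same B).trace_nonneg

theorem IsHermitian.trace_mul_eq_re {ρ A : Matrix n n ℂ} (hρ : ρ.IsHermitian)
    (hA : A.IsHermitian) : (ρ * A).trace = ((ρ * A).trace.re : ℂ) := by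
  refine (Complex.conj_eq_iff_re.mp ?_).symm
  rw [← star_def, ← trace_conjTranspose, conjTranspose_mul, hA.eq, hρ.eq, trace_mul_comm]

variable [DecidableEq n]

theorem neg_one_le_re_trace_mul {ρ A : Matrix n n ℂ} (hρ : ρ.PosSemidef) (htr : ρ.trace = 1)
    (hA : A.IsHermitian) (hA2 : A * A = 1) : -1 ≤ (ρ * A).trace.re := by
  have hsq : (1 + A)ᴴ * (1 + A) = (2 : ℂ) • (1 + A) := by
    simp only [conjTranspose_add, conjTranspose_one, hA.eq, add_mul, mul_add, hA2, one_mul,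
      mul_one, two_smul]
    abel
  have h := hρ.trace_mul_conjTranspose_mul_nonneg (1 + A)
  rw [hsq, Matrix.mul_smul, trace_smul, mul_add, trace_add, mul_one, htr, smul_eq_mul] at h
  have := (Complex.nonneg_iff.mp h).1
  norm_num at this
  linarith

theorem abs_re_trace_mul_le_one {ρ A : Matrix n n ℂ} (hρ : ρ.PosSemidef) (htr : ρ.trace = 1)
    (hA : A.IsHermitian) (hA2 : A * A = 1) : |(ρ * A).trace.re| ≤ 1 := by
  have hneg := neg_one_le_re_trace_mul hρ htr hA.neg (by rw [neg_mul_neg, hA2])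
  rw [mul_neg, trace_neg, Complex.neg_re] at hneg
  exact abs_le.mpr ⟨neg_one_le_re_trace_mul hρ htr hA hA2, by linarith⟩

end Matrix

theorem trace_kronecker_mul_Sop (α : ℝ) (ρA ρB A0 A1 B0 B1 : M2) :
    ((ρA ⊗ₖ ρB) * Sop α A0 A1 B0 B1).trace =
      α * ((ρA * A0).trace * (ρB * B0).trace + (ρA * A0).trace * (ρB * B1).trace)
        + (ρA * A1).trace * (ρB * B0).trace - (ρA * A1).trace * (ρB * B1).trace := by
  simp only [Sop, Matrix.mul_add, Matrix.mul_sub, Matrix.mul_smul, ← mul_kronecker_mul,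
    trace_add, trace_sub, trace_smul, trace_kronecker, smul_eq_mul]

theorem re_trace_kronecker_mul_Sop_le {α : ℝ} (hα : 1 ≤ α) {ρA ρB A0 A1 B0 B1 : M2}
    (hρA : ρA.PosSemidef) (hρA1 : ρA.trace = 1) (hρB : ρB.PosSemidef) (hρB1 : ρB.trace = 1)
    (hA0 : IsObs A0) (hA1 : IsObs A1) (hB0 : IsObs B0) (hB1 : IsObs B1) :
    ((ρA ⊗ₖ ρB) * Sop α A0 A1 B0 B1).trace.re ≤ 2 * α := by
  rw [trace_kronecker_mul_Sop, hρA.isHermitian.trace_mul_eq_re hA0.1,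
    hρA.isHermitian.trace_mul_eq_re hA1.1, hρB.isHermitian.trace_mul_eq_re hB0.1,
    hρB.isHermitian.trace_mul_eq_re hB1.1]
  norm_cast
  exact chsh_expression_le hα (abs_re_trace_mul_le_one hρA hρA1 hA0.1 hA0.2)
    (abs_re_trace_mul_le_one hρA hρA1 hA1.1 hA1.2) (abs_re_trace_mul_le_one hρB hρB1 hB0.1 hB0.2)
    (abs_re_trace_mul_le_one hρB hρB1 hB1.1 hB1.2)

theorem separable_CHSH_bound_general (α : ℝ) (hα : 1 ≤ α) (ρ : M4)
    (hsep : IsSepState ρ) :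
    ∀ (A0 A1 B0 B1 : M2) (s : ℝ),
      IsObs A0 → IsObs A1 → IsObs B0 → IsObs B1 →
      BellValue ρ α A0 A1 B0 B1 = (s : ℂ) → s ≤ 2 * α := by
  intro A0 A1 B0 B1 s hA0 hA1 hB0 hB1 hs
  obtain ⟨n, p, ρA, ρB, hp, hp1, hρA, hρB, rfl⟩ := hsep
  calc s = ∑ i, p i * ((ρA i ⊗ₖ ρB i) * Sop α A0 A1 B0 B1).trace.re := by
        simpa [BellValue, Finset.sum_mul, trace_sum, Matrix.smul_mul, trace_smul]
          using (congrArg Complex.re hs).symm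
    _ ≤ ∑ i, p i * (2 * α) := Finset.sum_le_sum fun i _ ↦ mul_le_mul_of_nonneg_left
        (re_trace_kronecker_mul_Sop_le hα (hρA i).1 (hρA i).2 (hρB i).1 (hρB i).2
          hA0 hA1 hB0 hB1) (hp i)
    _ = 2 * α := by rw [← Finset.sum_mul, hp1, one_mul]

/-- For a separable two-qubit state, every α-CHSH value is at most `2α`. -/
theorem separable_CHSH_bound (α : ℝ) (hα : 1 ≤ α) (ρ : M4)
    (hρ : IsState ρ) (hsep : IsSepState ρ) :
    ∀ (A0 A1 B0 B1 : M2) (s : ℝ),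
      IsObs A0 → IsObs A1 → IsObs B0 → IsObs B1 →
      BellValue ρ α A0 A1 B0 B1 = (s : ℂ) → s ≤ 2 * α :=
  separable_CHSH_bound_general α hα ρ hsep
end
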